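/- arXiv:2003.08703 — 3 statements merged into one kernel-verified Lean document; each statement's English description precedes it below -/
import Mathlib

section
/- The matrix T_{√5} = [[12456, 7200],[12096, 7560]] satisfies T_{√5}·(1,1)ᵀ = 19656·(1,1)ᵀ and T_{√5}·(-25,42)ᵀ = 360·(-25,42)ᵀ; moreover 19656 = 5³ + (5⁷-1)/(5-1). -/
/-- The matrix `T_{√5} = [[12456,7200],[12096,7560]]` (the Kneser `(√5)`-neighbour
operator on the genus of even unimodular rank-8 lattices over `ℤ[(1+√5)/2]`)
satisfies `T_{√5}·(1,1)ᵀ = 19656·(1,1)ᵀ` and `T_{√5}·(-25,42)ᵀ = 360·(-25,42)ᵀ`;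
moreover `19656 = 5³ + (5⁷-1)/(5-1)`. -/
theorem Tsqrt5_eigenvalues_Qsqrt5_rank8 :
    (!![12456, 7200; 12096, 7560] : Matrix (Fin 2) (Fin 2) ℤ).mulVec ![1, 1] =
        (19656 : ℤ) • ![1, 1] ∧
      (!![12456, 7200; 12096, 7560] : Matrix (Fin 2) (Fin 2) ℤ).mulVec ![-25, 42] =
        (360 : ℤ) • ![-25, 42] ∧
      (19656 : ℤ) = 5 ^ 3 + (5 ^ 7 - 1) / (5 - 1) := by
  refine ⟨?_, ?_, by decide⟩ <;>
  · funext i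
    fin_cases i <;> simp [Matrix.mulVec, dotProduct, Fin.sum_univ_succ]
end

section
/- Let g = [[a,b],[c,d]] ∈ M₂(O_E) satisfy ḡᵀJg = J (with J = [[0,-1],[1,0]]), equivalently a·d̄ - b̄·c = 1, a·c̄ = ā·c, and b·d̄ = b̄·d. Then there exists a unit u ∈ O_E^× with a = u·ā, b = u·b̄, c = u·c̄, d = u·d̄. -/
/-- If `a, c` are coprime elements of a domain with an involution `σ` and
`a·σc = σa·c`, then there is a single unit `u` with `a = u·σa` and `c = u·σc`. -/
lemma pair_unit {R : Type*} [CommRing R] [IsDomain R]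
    (σ : R →+* R) (hσ : ∀ x, σ (σ x) = x)
    (a c : R) (hco : IsCoprime a c) (h : a * σ c = σ a * c) :
    ∃ u : Rˣ, a = u * σ a ∧ c = u * σ c := by
  have hinj : Function.Injective σ := Function.LeftInverse.injective hσ
  rcases eq_or_ne a 0 with ha0 | ha0
  · -- a = 0, hence σ a = 0 and c is a unit
    have hsa0 : σ a = 0 := by rw [ha0, map_zero]
    have hcunit : IsUnit c := by
      have := hco
      rw [ha0] at this
      exact this.isUnit_of_dvd' (dvd_zero c) dvd_rfl
    have hscunit : IsUnit (σ c) := hcunit.map σ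
    obtain ⟨cu, hcu⟩ := hcunit
    obtain ⟨scu, hscu⟩ := hscunit
    refine ⟨cu * scu⁻¹, by rw [hsa0, ha0, mul_zero], ?_⟩
    have : (↑scu⁻¹ : R) * σ c = 1 := by rw [← hscu, Units.inv_mul]
    calc c = ↑cu * 1 := by rw [mul_one, hcu]
      _ = ↑cu * ((↑scu⁻¹ : R) * σ c) := by rw [this]
      _ = ↑(cu * scu⁻¹) * σ c := by rw [Units.val_mul]; ring
  · -- a ≠ 0 : a ∣ σ a and σ a ∣ a, so they are associated
    have hsa0 : σ a ≠ 0 := fun h0 => ha0 (hinj (by rw [h0, map_zero]))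
    have hd1 : a ∣ σ a := hco.dvd_of_dvd_mul_right ⟨σ c, h.symm⟩
    have hco' : IsCoprime (σ a) (σ c) := hco.map σ
    have hd2 : σ a ∣ a := hco'.dvd_of_dvd_mul_right ⟨c, h⟩
    obtain ⟨u, hu⟩ := associated_of_dvd_dvd hd2 hd1
    have ha : a = ↑u * σ a := by linear_combination -hu
    refine ⟨u, ha, ?_⟩
    have : σ a * c = σ a * (↑u * σ c) := by
      linear_combination (σ c) * ha - h
    exact mul_left_cancel₀ hsa0 this

/-- Let `E` be an imaginary quadratic field whose ring of integers `𝓞 E` is a PID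
(class number 1), with complex conjugation `σ`.  If `a,b,c,d ∈ 𝓞 E` satisfy the
unitary relations `a·d̄ - b̄·c = 1`, `a·c̄ = ā·c`, `b·d̄ = b̄·d` (i.e.
`g = [[a,b],[c,d]]` satisfies `ḡᵀJg = J`), then there is a unit `u ∈ (𝓞 E)ˣ`
with `a = u·ā`, `b = u·b̄`, `c = u·c̄`, `d = u·d̄`. -/
theorem unitary_entries_unit_multiple_of_conjugate
    (E : Type*) [Field E] [NumberField E]
    (hdeg : Module.finrank ℚ E = 2) (himag : IsEmpty (E →+* ℝ))
    (hPID : IsPrincipalIdealRing (NumberField.RingOfIntegers E))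
    (σ : NumberField.RingOfIntegers E →+* NumberField.RingOfIntegers E)
    (hσ : ∀ x, σ (σ x) = x) (hσne : σ ≠ RingHom.id _)
    (a b c d : NumberField.RingOfIntegers E)
    (h₁ : a * σ d - σ b * c = 1)
    (h₂ : a * σ c = σ a * c)
    (h₃ : b * σ d = σ b * d) :
    ∃ u : (NumberField.RingOfIntegers E)ˣ,
      a = u * σ a ∧ b = u * σ b ∧ c = u * σ c ∧ d = u * σ d := by
  -- σ applied to h₁
  have hσ₁ : σ a * d - b * σ c = 1 := by
    have := congrArg σ h₁
    rw [map_sub, map_mul, map_mul, map_one, hσ, hσ] at this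
    linear_combination this
  have hco_ac : IsCoprime a c := ⟨σ d, -σ b, by linear_combination h₁⟩
  have hco_bd : IsCoprime b d := ⟨-σ c, σ a, by linear_combination hσ₁⟩
  obtain ⟨u, ha, hc⟩ := pair_unit σ hσ a c hco_ac h₂
  obtain ⟨w, hb, hd⟩ := pair_unit σ hσ b d hco_bd h₃
  have huw : (↑u : NumberField.RingOfIntegers E) = ↑w := by
    have e1 : (↑u : NumberField.RingOfIntegers E) = a * d - b * c := by
      calc (↑u : NumberField.RingOfIntegers E) = ↑u * (σ a * d - b * σ c) := by
            rw [hσ₁, mul_one]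
        _ = (↑u * σ a) * d - b * (↑u * σ c) := by ring
        _ = a * d - b * c := by rw [← ha, ← hc]
    have e2 : (↑w : NumberField.RingOfIntegers E) = a * d - b * c := by
      calc (↑w : NumberField.RingOfIntegers E) = ↑w * (a * σ d - σ b * c) := by
            rw [h₁, mul_one]
        _ = a * (↑w * σ d) - (↑w * σ b) * c := by ring
        _ = a * d - b * c := by rw [← hd, ← hb]
    rw [e1, e2]
  exact ⟨u, ha, by rw [huw]; exact hb, hc, by rw [huw]; exact hd⟩
end

section
/- The 5×5 matrix M = [[65520, 3888000, 1640250, 0, 0],[1458, 516285, 3956283, 1119744, 0],[15, 96480, 2467899, 2998272, 31104],[0, 13365, 1467477, 3935781, 177147],[0, 0, 405405, 4717440, 470925]] has eigenvalues 5593770, 1395945, 357525, 85365, 23805, with respective eigenvectors (1,1,1,1,1)ᵀ, (-6000,-1854,-472,219,910)ᵀ, (648000,49572,-2144,-297,20020)ᵀ, (-8294400,-46656,10240,-7425,80080)ᵀ, (6220800,-69984,7680,-4455,40040)ᵀ. -/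
/-- The matrix of the Hecke operator `T_(2)` on the 5-dimensional space of
algebraic modular forms for the genus of rank-12 Hermitian `𝓞_{ℚ(√-3)}`-lattices
(even unimodular over `ℤ`) has eigenvalues `5593770, 1395945, 357525, 85365,
23805` with the indicated eigenvectors. -/
theorem hecke_T2_eigenvectors_hermitian_rank12 :
    letI M : Matrix (Fin 5) (Fin 5) ℤ :=
      !![65520, 3888000, 1640250, 0, 0;
         1458, 516285, 3956283, 1119744, 0;
         15, 96480, 2467899, 2998272, 31104;
         0, 13365, 1467477, 3935781, 177147;
         0, 0, 405405, 4717440, 470925]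
    M.mulVec ![1, 1, 1, 1, 1] = (5593770 : ℤ) • ![1, 1, 1, 1, 1] ∧
    M.mulVec ![-6000, -1854, -472, 219, 910] =
      (1395945 : ℤ) • ![-6000, -1854, -472, 219, 910] ∧
    M.mulVec ![648000, 49572, -2144, -297, 20020] =
      (357525 : ℤ) • ![648000, 49572, -2144, -297, 20020] ∧
    M.mulVec ![-8294400, -46656, 10240, -7425, 80080] =
      (85365 : ℤ) • ![-8294400, -46656, 10240, -7425, 80080] ∧
    M.mulVec ![6220800, -69984, 7680, -4455, 40040] =
      (23805 : ℤ) • ![6220800, -69984, 7680, -4455, 40040] := by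
  refine ⟨?_, ?_, ?_, ?_, ?_⟩ <;> (funext i; fin_cases i <;> simp [Matrix.mulVec, dotProduct, Fin.sum_univ_five])
end
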